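/- arXiv:2510.01392 — 4 statements merged into one kernel-verified Lean document; each statement's English description precedes it below -/
import Mathlib

section
/- In a complete binary tree of height h ≥ 1, let ℓ be any function assigning to each edge e a leaf-side descendant vertex ℓ(e) lying below e (meaning e is on the root-path of ℓ(e)); then some root-to-leaf path passes through at least h distinct labels, i.e. its edges e_1, ..., e_h carry at least h distinct values ℓ(e_1), ..., ℓ(e_h). -/
lemma suffix_concat_ne_nil {α : Type*} {l m : List α} {b : α}
    (h : l <:+ m ++ [b]) (hl : l ≠ []) : ∃ l', l = l' ++ [b] ∧ l' <:+ m := by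
  obtain ⟨t, ht⟩ := h
  rcases List.eq_nil_or_concat l with rfl | ⟨l', a, rfl⟩
  · exact absurd rfl hl
  · rw [List.concat_eq_append] at ht ⊢
    rw [← List.append_assoc] at ht
    obtain ⟨h1, h2⟩ := List.append_inj' ht rfl
    obtain rfl : a = b := by simpa using h2
    exact ⟨l', rfl, ⟨t, h1⟩⟩

lemma key : ∀ h : ℕ, (hh : 1 ≤ h) → ∀ ℓ : List Bool → List Bool,
    (∀ l : List Bool, l.length ≤ h → l ≠ [] → l <:+ ℓ l) →
    (∀ l : List Bool, l.length ≤ h → l ≠ [] → (ℓ l).length ≤ h) →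
    ∀ f : List Bool, ∃ leaf : List Bool, leaf.length = h ∧
      (∀ l1 l2 : List Bool, l1 ≠ [] → l2 ≠ [] → l1 <:+ leaf → l2 <:+ leaf →
        ℓ l1 = ℓ l2 → l1 = l2) ∧
      (∀ l : List Bool, l ≠ [] → l <:+ leaf → ℓ l ≠ f) := by
  intro h hh
  induction h, hh using Nat.le_induction with
  | base =>
    intro ℓ hdesc hlen f
    set b : Bool := if f = [true] then false else true with hb
    have hbf : [b] ≠ f := by
      by_cases hc : f = [true] <;> simp [hb, hc]
      · intro hcon; rw [← hcon] at hc; simp at hc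
    have hval : ℓ [b] = [b] := by
      obtain ⟨t, ht⟩ := hdesc [b] (by simp) (by simp)
      have := hlen [b] (by simp) (by simp)
      rw [← ht] at this ⊢
      simp at this
      simp [this]
    refine ⟨[b], rfl, ?_, ?_⟩
    · intro l1 l2 h1 h2 hs1 hs2 _
      have e1 : l1 = [b] := List.IsSuffix.eq_of_length hs1 (by
        have hx := hs1.length_le
        have hy : 1 ≤ l1.length := List.length_pos_iff.mpr h1
        simp only [List.length_singleton] at hx ⊢
        omega)
      have e2 : l2 = [b] := List.IsSuffix.eq_of_length hs2 (by
        have hx := hs2.length_le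
        have hy : 1 ≤ l2.length := List.length_pos_iff.mpr h2
        simp only [List.length_singleton] at hx ⊢
        omega)
      rw [e1, e2]
    · intro l hl hs
      have e1 : l = [b] := List.IsSuffix.eq_of_length hs (by
        have hx := hs.length_le
        have hy : 1 ≤ l.length := List.length_pos_iff.mpr hl
        simp only [List.length_singleton] at hx ⊢
        omega)
      rw [e1, hval]; exact hbf
  | succ h h1 IH =>
    intro ℓ hdesc hlen f
    -- choose b with ¬ [b] <:+ f
    have hlast : ∀ b : Bool, [b] <:+ f → f.getLast? = some b := by
      intro b ⟨t, ht⟩; rw [← ht]; simp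
    set b : Bool := if [true] <:+ f then false else true with hb
    have hbf : ¬ ([b] <:+ f) := by
      by_cases hc : [true] <:+ f
      · rw [hb, if_pos hc]
        intro hcon
        have := hlast _ hc
        have := hlast _ hcon
        simp_all
      · rwa [hb, if_neg hc]
    set ℓ' : List Bool → List Bool := fun l => (ℓ (l ++ [b])).dropLast with hℓ'
    have hdesc' : ∀ l : List Bool, l.length ≤ h → l ≠ [] → l <:+ ℓ' l := by
      intro l hl _
      obtain ⟨t, ht⟩ := hdesc (l ++ [b]) (by simp; omega) (by simp)
      refine ⟨t, ?_⟩
      rw [hℓ']; simp only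
      rw [← ht, ← List.append_assoc, List.dropLast_concat]
    have hlen' : ∀ l : List Bool, l.length ≤ h → l ≠ [] → (ℓ' l).length ≤ h := by
      intro l hl _
      have := hlen (l ++ [b]) (by simp; omega) (by simp)
      rw [hℓ']; simp only [List.length_dropLast]
      omega
    obtain ⟨leaf', hlleaf, inj', avoid'⟩ := IH ℓ' hdesc' hlen' ((ℓ [b]).dropLast)
    refine ⟨leaf' ++ [b], by simp [hlleaf], ?_, ?_⟩
    · intro l1 l2 hn1 hn2 hs1 hs2 heq
      obtain ⟨l1', rfl, hs1'⟩ := suffix_concat_ne_nil hs1 hn1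
      obtain ⟨l2', rfl, hs2'⟩ := suffix_concat_ne_nil hs2 hn2
      rcases eq_or_ne l1' [] with rfl | hne1 <;> rcases eq_or_ne l2' [] with rfl | hne2
      · rfl
      · exfalso
        apply avoid' l2' hne2 hs2'
        rw [hℓ']; simp only
        rw [← heq]; simp
      · exfalso
        apply avoid' l1' hne1 hs1'
        rw [hℓ']; simp only
        rw [heq]; simp
      · have : ℓ' l1' = ℓ' l2' := by rw [hℓ']; simp only; rw [heq]
        rw [inj' l1' l2' hne1 hne2 hs1' hs2' this]
    · intro l hn hs heqf
      have hlb : [b] <:+ l := by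
        obtain ⟨l', rfl, _⟩ := suffix_concat_ne_nil hs hn
        exact List.suffix_append l' [b]
      have hll : l.length ≤ h + 1 := by
        have hx := hs.length_le
        simp only [List.length_append, List.length_singleton, hlleaf] at hx
        exact hx
      have : [b] <:+ ℓ l := hlb.trans (hdesc l hll hn)
      rw [heqf] at this
      exact hbf this

/-- For any labeling `ℓ` of the edges of the complete binary tree of height
`h ≥ 1` (vertices: lists of Booleans of length at most `h`, root `[]`, an edge
identified with its child vertex `l`, labeled by a descendant `ℓ l` of `l`),
some root-to-leaf path passes through at least `h` distinct labels. -/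
theorem stmt12 (h : ℕ) (hh : 1 ≤ h) (ℓ : List Bool → List Bool)
    (hdesc : ∀ l : List Bool, l.length ≤ h → l ≠ [] → l <:+ ℓ l)
    (hlen : ∀ l : List Bool, l.length ≤ h → l ≠ [] → (ℓ l).length ≤ h) :
    ∃ leaf : List Bool, leaf.length = h ∧
      h ≤ Set.ncard {v : List Bool | ∃ l : List Bool, l ≠ [] ∧ l <:+ leaf ∧ ℓ l = v} := by
  obtain ⟨leaf, hlen', inj, _⟩ := key h hh ℓ hdesc hlen []
  refine ⟨leaf, hlen', ?_⟩
  set S := {v : List Bool | ∃ l : List Bool, l ≠ [] ∧ l <:+ leaf ∧ ℓ l = v} with hS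
  set g : Fin h → List Bool := fun i => ℓ (leaf.drop i) with hg
  have hdropne : ∀ i : Fin h, leaf.drop i ≠ [] := by
    intro i
    have : (leaf.drop i).length = h - i := by simp [hlen']
    intro hcon
    rw [hcon] at this
    simp at this
    omega
  have hginj : Function.Injective g := by
    intro i j hij
    have := inj (leaf.drop i) (leaf.drop j) (hdropne i) (hdropne j)
      (List.drop_suffix _ _) (List.drop_suffix _ _) hij
    have hli : (leaf.drop (i : ℕ)).length = h - i := by simp [hlen']
    have hlj : (leaf.drop (j : ℕ)).length = h - j := by simp [hlen']
    rw [this] at hli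
    have : (i : ℕ) = j := by omega
    exact Fin.ext this
  have hsub : Set.range g ⊆ S := by
    rintro v ⟨i, rfl⟩
    exact ⟨leaf.drop i, hdropne i, List.drop_suffix _ _, rfl⟩
  have hfin : S.Finite := by
    have : S ⊆ ℓ '' {l | l ∈ leaf.tails} := by
      rintro v ⟨l, _, hs, rfl⟩
      exact ⟨l, (List.mem_tails _ _).mpr hs, rfl⟩
    exact Set.Finite.subset ((leaf.tails).finite_toSet.image ℓ) this
  calc h = Nat.card (Fin h) := by simp
    _ = Nat.card (Set.range g) := (Nat.card_range_of_injective hginj).symm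
    _ = (Set.range g).ncard := Nat.card_coe_set_eq _
    _ ≤ S.ncard := Set.ncard_le_ncard hsub hfin
end

section
/- Let ℓ be a labeling of the edges of the complete binary tree of height h that assigns to each edge e a vertex in the subtree below e. Then there is a root-to-leaf path on which the edge labels take at least h distinct values. (Proof by induction on h: the two edges at the root have labels in disjoint subtrees; at most one of these labels can coincide with a label deeper along the chosen path of a subtree.) -/
/-!
A vertex is a list of Booleans read from the bottom up, so `l <:+ m` says that `l` is an ancestor
of `m`. Descend greedily: on reaching `l`, whose incoming edge carries the label `ℓ l` below `l`,
continue to a child of `l` that is not an ancestor of `ℓ l`. Every later label lies below that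
child, so it differs from `ℓ l`; hence all `h` labels on the resulting path are distinct.
-/

namespace List

variable {α : Type*}

theorem IsSuffix.exists_cons_suffix {l₁ l₂ : List α} (h : l₁ <:+ l₂)
    (hne : l₁ ≠ l₂) : ∃ a, a :: l₁ <:+ l₂ := by
  induction l₂ with
  | nil => exact absurd (suffix_nil.mp h) hne
  | cons b t ih =>
    rcases suffix_cons_iff.mp h with rfl | ht
    · exact absurd rfl hne
    · by_cases hlt : l₁ = t
      · exact ⟨b, hlt ▸ suffix_rfl⟩
      · obtain ⟨a, ha⟩ := ih ht hlt
        exact ⟨a, ha.trans (suffix_cons b t)⟩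

theorem exists_cons_not_suffix [Nontrivial α] (v w : List α) : ∃ a, ¬ a :: v <:+ w := by
  obtain ⟨a, b, hab⟩ := exists_pair_ne α
  by_contra! h
  have hlen : (a :: v).length = (b :: v).length := rfl
  rcases suffix_or_suffix_of_suffix (h a) (h b) with hs | hs
  · exact hab (cons_eq_cons.mp (hs.eq_of_length hlen)).1
  · exact hab (cons_eq_cons.mp (hs.eq_of_length hlen.symm)).1.symm

theorem ncard_setOf_ne_nil_suffix (l : List α) :
    {s : List α | s ≠ [] ∧ s <:+ l}.ncard = l.length := by
  induction l with
  | nil => simp [suffix_nil]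
  | cons a t ih =>
    have hset : {s : List α | s ≠ [] ∧ s <:+ a :: t} =
        insert (a :: t) {s | s ≠ [] ∧ s <:+ t} := by
      ext s
      simp only [Set.mem_ofPred_eq, Set.mem_insert_iff, suffix_cons_iff]
      constructor
      · rintro ⟨hs, rfl | ht⟩ <;> simp_all
      · rintro (rfl | ⟨hs, ht⟩) <;> simp_all
    have hfin : {s : List α | s ≠ [] ∧ s <:+ t}.Finite :=
      t.tails.finite_toSet.subset fun s hs => by simpa [mem_tails] using hs.2
    have hnotin : a :: t ∉ {s : List α | s ≠ [] ∧ s <:+ t} := fun h =>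
      by simpa using h.2.length_le
    rw [hset, Set.ncard_insert_of_notMem hnotin hfin, ih, length_cons]

theorem exists_length_eq_forall_cons_suffix_not_suffix [Nontrivial α]
    (f : List α → List α) (n : ℕ) :
    ∃ leaf : List α, leaf.length = n ∧ ∀ a l, a :: l <:+ leaf → ¬ a :: l <:+ f l := by
  induction n with
  | zero => exact ⟨[], rfl, fun a l h => by simpa using h.length_le⟩
  | succ n ih =>
    obtain ⟨leaf, hlen, havoid⟩ := ih
    obtain ⟨a, ha⟩ := exists_cons_not_suffix leaf (f leaf)
    refine ⟨a :: leaf, by rw [length_cons, hlen], fun b l hsuf => ?_⟩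
    rcases suffix_cons_iff.mp hsuf with heq | hsuf
    · obtain ⟨rfl, rfl⟩ := cons_eq_cons.mp heq
      exact ha
    · exact havoid b l hsuf

theorem injOn_of_forall_cons_suffix_not_suffix {f : List α → List α} {leaf : List α}
    (hdesc : ∀ l, l ≠ [] → l <:+ leaf → l <:+ f l)
    (havoid : ∀ a l, a :: l <:+ leaf → ¬ a :: l <:+ f l) :
    Set.InjOn f {l | l ≠ [] ∧ l <:+ leaf} := by
  have key {s t : List α} (hst : s <:+ t) (ht : t ≠ []) (htl : t <:+ leaf) (hf : f s = f t) :
      s = t := by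
    by_contra hne
    obtain ⟨a, ha⟩ := hst.exists_cons_suffix hne
    exact havoid a s (ha.trans htl) (hf ▸ ha.trans (hdesc t ht htl))
  rintro s ⟨hs, hsl⟩ t ⟨ht, htl⟩ hf
  rcases suffix_or_suffix_of_suffix hsl htl with hst | hts
  · exact key hst ht htl hf
  · exact (key hts hs hsl hf.symm).symm

end List

theorem stmt13_general (h : ℕ) (ℓ : List Bool → List Bool)
    (hdesc : ∀ l : List Bool, l.length ≤ h → l ≠ [] → l <:+ ℓ l) :
    ∃ leaf : List Bool, leaf.length = h ∧
      h ≤ Set.ncard (Set.image ℓ {l : List Bool | l ≠ [] ∧ l <:+ leaf}) := by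
  obtain ⟨leaf, hlen, havoid⟩ := List.exists_length_eq_forall_cons_suffix_not_suffix ℓ h
  have hinj : Set.InjOn ℓ {l | l ≠ [] ∧ l <:+ leaf} :=
    List.injOn_of_forall_cons_suffix_not_suffix
      (fun l hl hsuf => hdesc l (hlen ▸ hsuf.length_le) hl) havoid
  refine ⟨leaf, hlen, ?_⟩
  rw [hinj.ncard_image, List.ncard_setOf_ne_nil_suffix, hlen]

/-- For any labeling `ℓ` of the edges of the complete binary tree of height
`h` (vertices: lists of Booleans of length at most `h`, root `[]`, an edge
identified with its child vertex `l`, labeled by a descendant `ℓ l` of `l`),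
there is a root-to-leaf path on which the edge labels take at least `h`
distinct values. -/
theorem stmt13 (h : ℕ) (ℓ : List Bool → List Bool)
    (hdesc : ∀ l : List Bool, l.length ≤ h → l ≠ [] → l <:+ ℓ l)
    (hlen : ∀ l : List Bool, l.length ≤ h → l ≠ [] → (ℓ l).length ≤ h) :
    ∃ leaf : List Bool, leaf.length = h ∧
      h ≤ Set.ncard (Set.image ℓ {l : List Bool | l ≠ [] ∧ l <:+ leaf}) :=
  stmt13_general h ℓ hdesc
end

section
/- If P_1, ..., P_m are pairwise vertex-disjoint directed paths in a digraph G, and for each i at most one arc is added extending P_i from its endpoint into some P_j (j ≠ i), where the set of indices whose paths are extended forms an independent set in the graph with edges {i,j} whenever P_i's extension arc enters P_j, then the union of all paths and extension arcs has out-degree at most 1 at every vertex and contains no directed cycle. -/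
/-!
Every arc leaves a vertex `u` of some path `P i`: it is either the path arc to the successor of
`u`, or, when `u` is the endpoint of `P i` and `i` is extended, the extension arc; in a simple
path these two cases exclude each other, so the out-degree is at most one. For acyclicity, rank
the vertices lexicographically by (whether their path is unextended, position on the path): a
path arc keeps the first entry and raises the second, and an extension arc runs from an
extended path into an unextended one, so the rank strictly increases along every arc.
-/

/-- The arc set obtained from the union of the paths `P i` (arcs between
consecutive vertices) together with, for each extended index `i ∈ S`, one
extension arc from the last vertex of `P i` to `ext i`. -/
def unionArcs {V : Type*} {m : ℕ} (P : Fin m → List V) (S : Finset (Fin m))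
    (ext : Fin m → V) (u v : V) : Prop :=
  (∃ i : Fin m, (u, v) ∈ (P i).zip (P i).tail) ∨
    (∃ i ∈ S, (P i).getLast? = some u ∧ v = ext i)

theorem Relation.not_transGen_self_of_lt {α β : Type*} [Preorder β] {r : α → α → Prop}
    (f : α → β) (hf : ∀ a b, r a b → f a < f b) (a : α) : ¬ Relation.TransGen r a a := by
  intro h
  have hlt : Relation.TransGen (· < ·) (f a) (f a) := Relation.TransGen.lift f hf a a h
  rw [Relation.transGen_eq_self] at hlt
  exact lt_irrefl _ hlt

namespace List

variable {α : Type*} {l : List α} {u v : α}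

theorem exists_getElem_of_mem_zip_tail (h : (u, v) ∈ l.zip l.tail) :
    ∃ n, ∃ hn : n + 1 < l.length, l[n] = u ∧ l[n + 1] = v := by
  obtain ⟨n, hn, hget⟩ := mem_iff_getElem.1 h
  simp only [getElem_zip, getElem_tail, Prod.mk.injEq, length_zip, length_tail] at hget hn
  exact ⟨n, by omega, hget⟩

variable [BEq α] [LawfulBEq α]

theorem Nodup.idxOf_eq_succ_of_mem_zip_tail (hl : l.Nodup) (h : (u, v) ∈ l.zip l.tail) :
    v ∈ l ∧ l.idxOf v = l.idxOf u + 1 := by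
  obtain ⟨n, hn, rfl, rfl⟩ := exists_getElem_of_mem_zip_tail h
  exact ⟨getElem_mem _, by rw [hl.idxOf_getElem, hl.idxOf_getElem]⟩

theorem Nodup.idxOf_succ_eq_length_of_getLast? (hl : l.Nodup) (h : l.getLast? = some u) :
    l.idxOf u + 1 = l.length := by
  obtain ⟨ys, rfl⟩ := getLast?_eq_some_iff.1 h
  rw [← concat_eq_append, nodup_concat] at hl
  rw [idxOf_append_of_notMem hl.1, idxOf_cons_self, length_append, length_singleton]

end List

namespace unionArcs

variable {V : Type*} {m : ℕ} {P : Fin m → List V} {S : Finset (Fin m)} {ext : Fin m → V}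
  {u v : V}

theorem exists_mem_left (h : unionArcs P S ext u v) : ∃ i, u ∈ P i := by
  rcases h with ⟨i, hi⟩ | ⟨i, -, hlast, -⟩
  · exact ⟨i, (List.of_mem_zip hi).1⟩
  · exact ⟨i, List.mem_of_getLast? hlast⟩

variable [DecidableEq V] (hnd : ∀ i, (P i).Nodup)
  (huniq : ∀ i j v, v ∈ P i → v ∈ P j → i = j)
include hnd huniq

theorem cases_of_mem {i : Fin m} (h : unionArcs P S ext u v) (hu : u ∈ P i) :
    (v ∈ P i ∧ (P i).idxOf v = (P i).idxOf u + 1) ∨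
      (i ∈ S ∧ (P i).idxOf u + 1 = (P i).length ∧ v = ext i) := by
  rcases h with ⟨j, hj⟩ | ⟨j, hjS, hlast, rfl⟩
  · obtain rfl := huniq j i u (List.of_mem_zip hj).1 hu
    exact Or.inl ((hnd j).idxOf_eq_succ_of_mem_zip_tail hj)
  · obtain rfl := huniq j i u (List.mem_of_getLast? hlast) hu
    exact Or.inr ⟨hjS, (hnd j).idxOf_succ_eq_length_of_getLast? hlast, rfl⟩

theorem right_unique {w : V} (hv : unionArcs P S ext u v) (hw : unionArcs P S ext u w) :
    v = w := by
  obtain ⟨i, hu⟩ := hv.exists_mem_left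
  rcases hv.cases_of_mem hnd huniq hu with ⟨hvP, hvi⟩ | ⟨-, hlast, rfl⟩ <;>
    rcases hw.cases_of_mem hnd huniq hu with ⟨hwP, hwi⟩ | ⟨-, hlast', rfl⟩
  · exact (List.idxOf_inj hvP).1 (hvi.trans hwi.symm)
  · have := List.idxOf_lt_length_of_mem hvP
    omega
  · have := List.idxOf_lt_length_of_mem hwP
    omega
  · rfl

end unionArcs

section rank

variable {V : Type*} [DecidableEq V] {m : ℕ} (P : Fin m → List V) (S : Finset (Fin m))

/-- Vertices outside every path get the junk rank `toLex (0, 0)`; no arc touches them. -/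
noncomputable def pathRank (v : V) : ℕ ×ₗ ℕ :=
  if h : ∃ i, v ∈ P i then toLex (if h.choose ∈ S then 0 else 1, (P h.choose).idxOf v)
  else toLex (0, 0)

variable {P S}

theorem pathRank_of_mem (huniq : ∀ i j v, v ∈ P i → v ∈ P j → i = j) {i : Fin m} {v : V}
    (hv : v ∈ P i) : pathRank P S v = toLex (if i ∈ S then 0 else 1, (P i).idxOf v) := by
  have h : ∃ j, v ∈ P j := ⟨i, hv⟩
  rw [pathRank, dif_pos h, huniq _ _ v h.choose_spec hv]

theorem pathRank_lt_of_unionArcs {ext : Fin m → V} (hnd : ∀ i, (P i).Nodup)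
    (huniq : ∀ i j v, v ∈ P i → v ∈ P j → i = j) (hext : ∀ i ∈ S, ∃ j ∉ S, ext i ∈ P j)
    {u v : V} (h : unionArcs P S ext u v) : pathRank P S u < pathRank P S v := by
  obtain ⟨i, hu⟩ := h.exists_mem_left
  rw [pathRank_of_mem huniq hu]
  rcases h.cases_of_mem hnd huniq hu with ⟨hv, hidx⟩ | ⟨hiS, -, rfl⟩
  · rw [pathRank_of_mem huniq hv, Prod.Lex.toLex_lt_toLex]
    omega
  · obtain ⟨j, hjS, hv⟩ := hext i hiS
    rw [pathRank_of_mem huniq hv, Prod.Lex.toLex_lt_toLex, if_pos hiS, if_neg hjS]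
    exact Or.inl zero_lt_one

end rank

theorem stmt15_general {V : Type*} (m : ℕ) (P : Fin m → List V)
    (hnd : ∀ i, (P i).Nodup)
    (hdisj : ∀ i j : Fin m, i ≠ j → ∀ v : V, v ∈ P i → v ∉ P j)
    (S : Finset (Fin m)) (ext : Fin m → V) (t : Fin m → Fin m)
    (htarget : ∀ i ∈ S, ext i ∈ P (t i) ∧ t i ≠ i)
    (hind : ∀ i ∈ S, t i ∉ S) :
    (∀ u v w : V, unionArcs P S ext u v → unionArcs P S ext u w → v = w) ∧
      ∀ u : V, ¬ Relation.TransGen (unionArcs P S ext) u u := by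
  classical
  have huniq : ∀ i j v, v ∈ P i → v ∈ P j → i = j := fun i j v hi hj =>
    by_contra fun hij => hdisj i j hij v hi hj
  have hext : ∀ i ∈ S, ∃ j ∉ S, ext i ∈ P j := fun i hi => ⟨t i, hind i hi, (htarget i hi).1⟩
  exact ⟨fun _ _ _ => unionArcs.right_unique hnd huniq,
    Relation.not_transGen_self_of_lt (pathRank P S) fun _ _ =>
      pathRank_lt_of_unionArcs hnd huniq hext⟩

/-- If pairwise vertex-disjoint simple directed paths `P i` are extended, for
the indices `i` in an independent set `S` of the dependency graph (so each
extension arc enters a path `P (t i)` with `t i ≠ i` and `t i ∉ S`), then the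
union of the paths and extension arcs has out-degree at most 1 everywhere and
contains no directed cycle. -/
theorem stmt15 {V : Type*} [Fintype V] (m : ℕ) (P : Fin m → List V)
    (hne : ∀ i, P i ≠ []) (hnd : ∀ i, (P i).Nodup)
    (hdisj : ∀ i j : Fin m, i ≠ j → ∀ v : V, v ∈ P i → v ∉ P j)
    (S : Finset (Fin m)) (ext : Fin m → V) (t : Fin m → Fin m)
    (htarget : ∀ i ∈ S, ext i ∈ P (t i) ∧ t i ≠ i)
    (hind : ∀ i ∈ S, t i ∉ S) :
    (∀ u v w : V, unionArcs P S ext u v → unionArcs P S ext u w → v = w) ∧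
      ∀ u : V, ¬ Relation.TransGen (unionArcs P S ext) u u :=
  stmt15_general m P hnd hdisj S ext t htarget hind
end

section
/- For every instance of the Steiner Path Aggregation Problem on k terminals restricted to trees (i.e., the union of the proposed paths forms a tree after forgetting colors and parallel arcs), there exists an r-arborescence in which every terminal's path to the root switches colors at most ⌈log₂ n⌉ times, where n is the number of vertices. -/
/-- The number of vertices in the subtree rooted at `v` of the rooted tree
given by the parent function `parent`. -/
noncomputable def subSize {V : Type*} (parent : V → V) (v : V) : ℕ :=
  Set.ncard {u | ∃ k : ℕ, parent^[k] u = v}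

/-!
Heavy path decomposition. Give the edge above `v` the color of the terminal `ℓ v` reached from `v`
by repeatedly moving to a child whose subtree contains a terminal and is as large as possible.
If a terminal's path switches colors between `c` and its parent `v`, then `ℓ c ≠ ℓ v`, so `c`
is not the heavy child of `v`; the heavy child's subtree is disjoint from that of `c` and at least
as large, so the subtree size at least doubles from `c` to `v`. Subtree sizes along the path
grow from `1` to at most `n`, so there are at most `log₂ n` switches.
-/

open Function Set

namespace HeavyPath

variable {V : Type*}

def IsDesc (parent : V → V) (u v : V) : Prop := ∃ k : ℕ, parent^[k] u = v

namespace IsDesc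

variable {parent : V → V} {u v w : V}

lemma refl (parent : V → V) (v : V) : IsDesc parent v v := ⟨0, rfl⟩

lemma trans (h₁ : IsDesc parent u v) (h₂ : IsDesc parent v w) : IsDesc parent u w := by
  obtain ⟨a, rfl⟩ := h₁
  obtain ⟨b, rfl⟩ := h₂
  exact ⟨b + a, iterate_add_apply parent b a u⟩

lemma to_parent (h : IsDesc parent u v) : IsDesc parent u (parent v) :=
  h.trans ⟨1, rfl⟩

lemma total (hu : IsDesc parent w u) (hv : IsDesc parent w v) :
    IsDesc parent u v ∨ IsDesc parent v u := by
  obtain ⟨a, rfl⟩ := hu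
  obtain ⟨b, rfl⟩ := hv
  rcases le_total a b with h | h
  · exact Or.inl ⟨b - a, by rw [← iterate_add_apply, Nat.sub_add_cancel h]⟩
  · exact Or.inr ⟨a - b, by rw [← iterate_add_apply, Nat.sub_add_cancel h]⟩

lemma exists_child (h : IsDesc parent u v) (hne : u ≠ v) :
    ∃ c, parent c = v ∧ c ≠ v ∧ IsDesc parent u c := by
  obtain ⟨k, hk⟩ := h
  induction k with
  | zero => exact absurd hk hne
  | succ k ih =>
    by_cases hc : parent^[k] u = v
    · exact ih hc
    · exact ⟨parent^[k] u, by rwa [iterate_succ_apply'] at hk, hc, k, rfl⟩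

end IsDesc

section RootedTree

variable {parent : V → V} {r : V}

lemma eq_root_of_isPeriodicPt (hroot : parent r = r) (hreach : ∀ v, IsDesc parent v r)
    {v : V} {d : ℕ} (hd : 0 < d) (h : IsPeriodicPt parent d v) : v = r := by
  obtain ⟨m, hm⟩ := hreach v
  calc v = parent^[d * m - m + m] v := by
        rw [Nat.sub_add_cancel (Nat.le_mul_of_pos_left m hd)]; exact (h.mul_const m).eq.symm
    _ = r := by rw [iterate_add_apply, hm, iterate_fixed hroot]

lemma eq_root_of_parent_eq_self (hroot : parent r = r) (hreach : ∀ v, IsDesc parent v r)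
    {v : V} (h : parent v = v) : v = r :=
  eq_root_of_isPeriodicPt hroot hreach one_pos h

lemma IsDesc.antisymm (hroot : parent r = r) (hreach : ∀ v, IsDesc parent v r) {u v : V}
    (huv : IsDesc parent u v) (hvu : IsDesc parent v u) : u = v := by
  obtain ⟨a, rfl⟩ := huv
  obtain ⟨b, hb⟩ := hvu
  rcases Nat.eq_zero_or_pos (b + a) with hba | hba
  · rw [Nat.eq_zero_of_add_eq_zero_left hba, iterate_zero_apply]
  · have hu : u = r :=
      eq_root_of_isPeriodicPt hroot hreach hba <| by
        rw [IsPeriodicPt, IsFixedPt, iterate_add_apply, hb]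
    rw [hu, iterate_fixed hroot]

variable [Finite V]

lemma subSize_pos (parent : V → V) (v : V) : 0 < subSize parent v :=
  (ncard_pos (toFinite _)).2 ⟨v, IsDesc.refl parent v⟩

lemma subSize_le_natCard (parent : V → V) (v : V) : subSize parent v ≤ Nat.card V :=
  ncard_le_card _

lemma subSize_le_subSize_parent (parent : V → V) (v : V) :
    subSize parent v ≤ subSize parent (parent v) :=
  ncard_le_ncard (fun _ hu => IsDesc.to_parent hu) (toFinite _)

lemma subSize_lt_subSize_parent (hroot : parent r = r) (hreach : ∀ v, IsDesc parent v r)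
    {v : V} (hv : parent v ≠ v) : subSize parent v < subSize parent (parent v) := by
  refine ncard_lt_ncard ((ssubset_iff_of_subset fun _ hu => IsDesc.to_parent hu).2 ?_) (toFinite _)
  exact ⟨parent v, IsDesc.refl parent _,
    fun h => hv (IsDesc.antisymm hroot hreach h (IsDesc.refl parent v).to_parent)⟩

lemma subSize_add_subSize_le (hroot : parent r = r) (hreach : ∀ v, IsDesc parent v r)
    {v c₁ c₂ : V} (hv : parent v ≠ v) (h₁ : parent c₁ = v) (h₂ : parent c₂ = v)
    (hne : c₁ ≠ c₂) : subSize parent c₁ + subSize parent c₂ ≤ subSize parent v := by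
  have not_desc : ∀ {a b}, parent a = v → parent b = v → a ≠ b → ¬IsDesc parent a b := by
    rintro a b ha hb hab ⟨_ | k, hk⟩
    · exact hab hk
    · have hbv : b = v := IsDesc.antisymm hroot hreach ⟨1, hb⟩
        ⟨k, by rwa [← ha, ← iterate_succ_apply]⟩
      exact hv (hbv ▸ hb)
  have hdisj : Disjoint {u | IsDesc parent u c₁} {u | IsDesc parent u c₂} :=
    disjoint_left.2 fun w hw₁ hw₂ => (hw₁.total hw₂).elim (not_desc h₁ h₂ hne)
      (not_desc h₂ h₁ hne.symm)
  have hsub :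
      {u | IsDesc parent u c₁} ∪ {u | IsDesc parent u c₂} ⊆ {u | IsDesc parent u v} := by
    rintro w (hw | hw)
    · exact h₁ ▸ hw.to_parent
    · exact h₂ ▸ hw.to_parent
  calc subSize parent c₁ + subSize parent c₂
        = ({u | IsDesc parent u c₁} ∪ {u | IsDesc parent u c₂}).ncard :=
      (ncard_union_eq hdisj).symm
    _ ≤ subSize parent v := ncard_le_ncard hsub

end RootedTree

def terminalChildren (parent : V → V) (R : Set V) (v : V) : Set V :=
  {c | parent c = v ∧ c ≠ v ∧ ∃ u ∈ R, IsDesc parent u c}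

open Classical in
noncomputable def heavyStep [Finite V] (parent : V → V) (R : Set V) (v : V) : V :=
  if h : (terminalChildren parent R v).Nonempty then
    (exists_max_image _ (subSize parent) (toFinite _) h).choose
  else v

noncomputable def heavyPathEnd [Finite V] (parent : V → V) (R : Set V) (v : V) : V :=
  (heavyStep parent R)^[Nat.card V] v

section HeavyStep

variable [Finite V] {parent : V → V} {R : Set V} {r : V} {v : V}

lemma heavyStep_spec (h : (terminalChildren parent R v).Nonempty) :
    heavyStep parent R v ∈ terminalChildren parent R v ∧
      ∀ c ∈ terminalChildren parent R v,
        subSize parent c ≤ subSize parent (heavyStep parent R v) := by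
  rw [heavyStep, dif_pos h]
  exact (exists_max_image _ (subSize parent) (toFinite _) h).choose_spec

lemma heavyStep_eq_self (h : ¬ (terminalChildren parent R v).Nonempty) :
    heavyStep parent R v = v :=
  dif_neg h

lemma parent_heavyStep (h : heavyStep parent R v ≠ v) : parent (heavyStep parent R v) = v := by
  by_cases hne : (terminalChildren parent R v).Nonempty
  · exact (heavyStep_spec hne).1.1
  · exact absurd (heavyStep_eq_self hne) h

lemma isDesc_heavyStep_iterate (n : ℕ) (v : V) :
    IsDesc parent ((heavyStep parent R)^[n] v) v := by
  induction n with
  | zero => exact IsDesc.refl parent v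
  | succ n ih =>
    rw [iterate_succ_apply']
    by_cases h : heavyStep parent R ((heavyStep parent R)^[n] v) = (heavyStep parent R)^[n] v
    · rwa [h]
    · exact IsDesc.trans ⟨1, parent_heavyStep h⟩ ih

lemma exists_mem_isDesc_heavyStep_iterate (n : ℕ) (h : ∃ u ∈ R, IsDesc parent u v) :
    ∃ u ∈ R, IsDesc parent u ((heavyStep parent R)^[n] v) := by
  induction n with
  | zero => exact h
  | succ n ih =>
    rw [iterate_succ_apply']
    by_cases hne : (terminalChildren parent R ((heavyStep parent R)^[n] v)).Nonempty
    · exact (heavyStep_spec hne).1.2.2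
    · rwa [heavyStep_eq_self hne]

lemma mem_of_heavyStep_eq_self (hfix : heavyStep parent R v = v)
    (h : ∃ u ∈ R, IsDesc parent u v) : v ∈ R := by
  obtain ⟨u, hu, huv⟩ := h
  by_contra hv
  obtain ⟨c, hc, hcv, huc⟩ := huv.exists_child (ne_of_mem_of_not_mem hu hv)
  exact (heavyStep_spec ⟨c, hc, hcv, u, hu, huc⟩).1.2.1 hfix

lemma heavyStep_iterate_fixed (hroot : parent r = r) (hreach : ∀ v, IsDesc parent v r) {n : ℕ}
    (hn : subSize parent v ≤ n) :
    heavyStep parent R ((heavyStep parent R)^[n] v) = (heavyStep parent R)^[n] v := by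
  induction n generalizing v with
  | zero => exact absurd hn (subSize_pos parent v).not_ge
  | succ n ih =>
    by_cases h : heavyStep parent R v = v
    · rw [iterate_fixed h, h]
    · have hlt : subSize parent (heavyStep parent R v) < subSize parent v := by
        have hp := parent_heavyStep h
        have := subSize_lt_subSize_parent hroot hreach (v := heavyStep parent R v)
          (by rw [hp]; exact Ne.symm h)
        rwa [hp] at this
      rw [iterate_succ_apply]
      exact ih (by omega)

lemma heavyStep_heavyPathEnd (hroot : parent r = r) (hreach : ∀ v, IsDesc parent v r) :
    heavyStep parent R (heavyPathEnd parent R v) = heavyPathEnd parent R v :=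
  heavyStep_iterate_fixed hroot hreach (subSize_le_natCard parent v)

lemma heavyPathEnd_heavyStep (hroot : parent r = r) (hreach : ∀ v, IsDesc parent v r) :
    heavyPathEnd parent R (heavyStep parent R v) = heavyPathEnd parent R v := by
  rw [heavyPathEnd, ← iterate_succ_apply, iterate_succ_apply']
  exact heavyStep_heavyPathEnd hroot hreach

lemma heavyPathEnd_mem (hroot : parent r = r) (hreach : ∀ v, IsDesc parent v r)
    (h : ∃ u ∈ R, IsDesc parent u v) : heavyPathEnd parent R v ∈ R :=
  mem_of_heavyStep_eq_self (heavyStep_heavyPathEnd hroot hreach)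
    (exists_mem_isDesc_heavyStep_iterate _ h)

lemma two_mul_subSize_le_of_heavyPathEnd_ne (hroot : parent r = r)
    (hreach : ∀ v, IsDesc parent v r) {c : V} (hv : parent v ≠ v) (hc : parent c = v)
    (hterm : ∃ u ∈ R, IsDesc parent u c)
    (hne : heavyPathEnd parent R c ≠ heavyPathEnd parent R v) :
    2 * subSize parent c ≤ subSize parent v := by
  have hcv : c ≠ v := fun h => hv (h ▸ hc)
  have hmem : c ∈ terminalChildren parent R v := ⟨hc, hcv, hterm⟩
  obtain ⟨⟨hh, -, -⟩, hmax⟩ := heavyStep_spec ⟨c, hmem⟩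
  have hhc : heavyStep parent R v ≠ c := fun h =>
    hne (h ▸ heavyPathEnd_heavyStep hroot hreach)
  have := subSize_add_subSize_le hroot hreach hv hh hc hhc
  have := hmax c hmem
  omega

end HeavyStep

lemma two_pow_ncard_inter_Iio_mul_le {s : ℕ → ℕ} {A : Set ℕ} (hs : ∀ i, s i ≤ s (i + 1))
    (hA : ∀ i ∈ A, 2 * s i ≤ s (i + 1)) (n : ℕ) :
    2 ^ (A ∩ Iio n).ncard * s 0 ≤ s n := by
  induction n with
  | zero => simp
  | succ n ih =>
    have hfin : (A ∩ Iio n).Finite := (finite_Iio n).inter_of_right A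
    rw [Iio_add_one_eq_Iic, ← Iio_insert]
    by_cases hn : n ∈ A
    · rw [inter_insert_of_mem hn, ncard_insert_of_notMem (fun h => lt_irrefl n h.2) hfin, pow_succ]
      nlinarith [hA n hn]
    · rw [inter_insert_of_notMem hn]
      exact ih.trans (hs n)

end HeavyPath

open HeavyPath in
theorem stmt17_general {V C : Type*} [Fintype V] (r : V) (parent : V → V)
    (hroot : parent r = r) (hreach : ∀ v : V, ∃ k : ℕ, parent^[k] v = r)
    (R : Set V) (col : V → C) :
    ∃ ℓ : V → V,
      (∀ v : V, v ≠ r → (∃ u ∈ R, ∃ k : ℕ, parent^[k] u = v) →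
        ℓ v ∈ R ∧ ∃ k : ℕ, parent^[k] (ℓ v) = v) ∧
      ∀ u ∈ R,
        {i : ℕ | parent^[i + 1] u ≠ r ∧
            col (ℓ (parent^[i] u)) ≠ col (ℓ (parent^[i + 1] u))}.ncard
          ≤ Nat.clog 2 (Fintype.card V) := by
  refine ⟨heavyPathEnd parent R, fun v _ hv ↦
    ⟨heavyPathEnd_mem hroot hreach hv, isDesc_heavyStep_iterate _ v⟩, fun u hu ↦ ?_⟩
  set A := {i : ℕ | parent^[i + 1] u ≠ r ∧
    col (heavyPathEnd parent R (parent^[i] u)) ≠ col (heavyPathEnd parent R (parent^[i + 1] u))}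
  have hdouble :
      ∀ i ∈ A, 2 * subSize parent (parent^[i] u) ≤ subSize parent (parent^[i + 1] u) := by
    rintro i ⟨hr, hcol⟩
    rw [iterate_succ_apply'] at hr hcol ⊢
    exact two_mul_subSize_le_of_heavyPathEnd_ne hroot hreach
      (fun h => hr (eq_root_of_parent_eq_self hroot hreach h)) rfl ⟨u, hu, i, rfl⟩
      (fun h => hcol (congrArg col h))
  obtain ⟨m, hm⟩ := hreach u
  have hAm : A ∩ Iio m = A := inter_eq_left.2 fun i hi => by
    by_contra! him
    apply hi.1
    rw [mem_Iio, not_lt] at him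
    rw [← Nat.sub_add_cancel (show m ≤ i + 1 by omega), iterate_add_apply, hm,
      iterate_fixed hroot]
  have hpow := two_pow_ncard_inter_Iio_mul_le
    (fun i => by rw [iterate_succ_apply']; exact subSize_le_subSize_parent parent _) hdouble m
  rw [hAm, hm, iterate_zero_apply] at hpow
  have hcard : 2 ^ A.ncard ≤ Fintype.card V := by
    rw [Fintype.card_eq_nat_card]
    nlinarith [subSize_pos parent u, subSize_le_natCard parent r]
  exact (Nat.le_log_of_pow_le one_lt_two hcard).trans (Nat.log_le_clog 2 _)

/-- Steiner Path Aggregation on trees: the underlying graph is a tree oriented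
toward the root `r` (given by `parent`), each terminal `u ∈ R` proposes its
tree path to `r`, all of whose arcs carry the color `col u`.  There is a
choice `ℓ`, for each tree edge (identified with its child endpoint `v`) used
by some terminal, of a terminal whose proposed path contains that edge, such
that every terminal's resulting path to the root switches colors at most
`⌈log₂ n⌉` times. -/
theorem stmt17 {V C : Type*} [Fintype V] (r : V) (parent : V → V)
    (hroot : parent r = r) (hreach : ∀ v : V, ∃ k : ℕ, parent^[k] v = r)
    (R : Set V) (hrR : r ∉ R) (col : V → C) :
    ∃ ℓ : V → V,
      (∀ v : V, v ≠ r → (∃ u ∈ R, ∃ k : ℕ, parent^[k] u = v) →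
        ℓ v ∈ R ∧ ∃ k : ℕ, parent^[k] (ℓ v) = v) ∧
      ∀ u ∈ R,
        {i : ℕ | parent^[i + 1] u ≠ r ∧
            col (ℓ (parent^[i] u)) ≠ col (ℓ (parent^[i + 1] u))}.ncard
          ≤ Nat.clog 2 (Fintype.card V) :=
  stmt17_general r parent hroot hreach R col
end
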